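/- arXiv:1204.5923 — 7 statements merged into one kernel-verified Lean document; each statement's English description precedes it below -/
import Mathlib

section
/- For every nonnegative integer n, the sum over all pairs of nonnegative integers (i, j) with i + j = n of C_{2i} · C_{2j} equals 4^n · C_n, where C_m denotes the m-th Catalan number. -/
open Finset

/-!
Creative telescoping (Zeilberger). Both sides satisfy the first-order recurrence
`(n + 2) a (n + 1) = 8 (2n + 1) a n`: for `4ⁿ Cₙ` this is `(n + 2) C_{n+1} = 2 (2n + 1) Cₙ`,
and for the convolution it follows by summing, along the antidiagonal `i + j = n`, an identity whose
right-hand side is a difference `G (i, j + 1) - G (i + 1, j)` of the certificate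
`G (i, j) = i (2i² + 6ij + 3i + 3j + 1) C_{2i} C_{2j}`, which telescopes to `-G (n + 1, 0)`.
The identity itself only needs the ratio
`C_{2i+2} / C_{2i} = 4 (4i + 1) (4i + 3) / ((2i + 2) (2i + 3))`.
-/

theorem add_two_mul_catalan_succ (n : ℕ) :
    (n + 2) * catalan (n + 1) = 2 * (2 * n + 1) * catalan n := by
  refine Nat.eq_of_mul_eq_mul_left n.succ_pos ?_
  calc (n + 1) * ((n + 2) * catalan (n + 1)) = (n + 1) * (n + 1).centralBinom := by
        rw [← succ_mul_catalan_eq_centralBinom]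
    _ = 2 * (2 * n + 1) * n.centralBinom := Nat.succ_mul_centralBinom_succ n
    _ = (n + 1) * (2 * (2 * n + 1) * catalan n) := by
        rw [← succ_mul_catalan_eq_centralBinom]; ring

theorem catalan_two_mul_succ (n : ℕ) :
    (2 * n + 2) * (2 * n + 3) * catalan (2 * (n + 1)) =
      4 * (4 * n + 1) * (4 * n + 3) * catalan (2 * n) := by
  have h₁ := add_two_mul_catalan_succ (2 * n)
  have h₂ := add_two_mul_catalan_succ (2 * n + 1)
  calc (2 * n + 2) * (2 * n + 3) * catalan (2 * (n + 1))
      = (2 * n + 2) * ((2 * n + 1 + 2) * catalan (2 * n + 1 + 1)) := by ring_nf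
    _ = 2 * (4 * n + 3) * ((2 * n + 2) * catalan (2 * n + 1)) := by rw [h₂]; ring
    _ = 4 * (4 * n + 1) * (4 * n + 3) * catalan (2 * n) := by rw [h₁]; ring

theorem Finset.Nat.sum_antidiagonal_telescope {M : Type*} [AddCommGroup M] (f : ℕ × ℕ → M)
    (n : ℕ) :
    ∑ p ∈ antidiagonal n, (f (p.1, p.2 + 1) - f (p.1 + 1, p.2)) =
      f (0, n + 1) - f (n + 1, 0) := by
  have h₁ := Nat.sum_antidiagonal_succ (f := f) (n := n)
  have h₂ := Nat.sum_antidiagonal_succ' (f := f) (n := n)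
  rw [sum_sub_distrib]
  linear_combination (norm := skip) h₁ - h₂
  abel

def shapiroCertificate (p : ℕ × ℕ) : ℚ :=
  p.1 * (2 * p.1 ^ 2 + 6 * p.1 * p.2 + 3 * p.1 + 3 * p.2 + 1) *
    catalan (2 * p.1) * catalan (2 * p.2)

theorem shapiroCertificate_sub (i j : ℕ) :
    ((i + j : ℚ) + 1) * (2 * (i + j) + 3) *
        ((i + j + 2) * (catalan (2 * i) * catalan (2 * (j + 1)))
          - 8 * (2 * (i + j) + 1) * (catalan (2 * i) * catalan (2 * j))) =
      shapiroCertificate (i, j + 1) - shapiroCertificate (i + 1, j) := by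
  have hi : ((2 * i + 2) * (2 * i + 3) * catalan (2 * (i + 1)) : ℚ) =
      4 * (4 * i + 1) * (4 * i + 3) * catalan (2 * i) := by exact_mod_cast catalan_two_mul_succ i
  have hj : ((2 * j + 2) * (2 * j + 3) * catalan (2 * (j + 1)) : ℚ) =
      4 * (4 * j + 1) * (4 * j + 3) * catalan (2 * j) := by exact_mod_cast catalan_two_mul_succ j
  simp only [shapiroCertificate]
  push_cast
  linear_combination ((3 * i + j + 2) / 2 * (catalan (2 * i) : ℚ)) * hj
    + ((i + 3 * j + 2) / 2 * (catalan (2 * j) : ℚ)) * hi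

theorem add_two_mul_sum_catalan_two_mul_succ (n : ℕ) :
    (n + 2) * ∑ p ∈ antidiagonal (n + 1), catalan (2 * p.1) * catalan (2 * p.2) =
      8 * (2 * n + 1) * ∑ p ∈ antidiagonal n, catalan (2 * p.1) * catalan (2 * p.2) := by
  suffices h : ((n : ℚ) + 2) *
      ∑ p ∈ antidiagonal (n + 1), (catalan (2 * p.1) * catalan (2 * p.2) : ℚ) =
      8 * (2 * n + 1) * ∑ p ∈ antidiagonal n, (catalan (2 * p.1) * catalan (2 * p.2) : ℚ) by
    exact_mod_cast h
  have hterm : ∀ p ∈ antidiagonal n, ((n : ℚ) + 1) * (2 * n + 3) *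
      ((n + 2) * (catalan (2 * p.1) * catalan (2 * (p.2 + 1)))
        - 8 * (2 * n + 1) * (catalan (2 * p.1) * catalan (2 * p.2))) =
      shapiroCertificate (p.1, p.2 + 1) - shapiroCertificate (p.1 + 1, p.2) := by
    rintro ⟨i, j⟩ hij
    rw [HasAntidiagonal.mem_antidiagonal] at hij
    subst hij
    push_cast
    exact shapiroCertificate_sub i j
  have htel := Nat.sum_antidiagonal_telescope shapiroCertificate n
  rw [← sum_congr rfl hterm, ← mul_sum, sum_sub_distrib, ← mul_sum, ← mul_sum] at htel
  rw [Nat.sum_antidiagonal_succ']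
  refine mul_left_cancel₀ (by positivity : ((n : ℚ) + 1) * (2 * n + 3) ≠ 0) ?_
  simp only [shapiroCertificate] at htel
  push_cast at htel ⊢
  linear_combination htel

/-- **Shapiro's Catalan convolution.** For every nonnegative integer `n`,
`∑_{i+j=n} C_{2i} C_{2j} = 4^n C_n`, where `C_m` is the `m`-th Catalan number. -/
theorem shapiro_catalan_convolution (n : ℕ) :
    ∑ ij ∈ Finset.HasAntidiagonal.antidiagonal n, catalan (2 * ij.1) * catalan (2 * ij.2) =
      4 ^ n * catalan n := by
  induction n with
  | zero => simp
  | succ n ih =>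
    refine Nat.eq_of_mul_eq_mul_left (Nat.succ_pos (n + 1)) ?_
    calc (n + 2) * ∑ ij ∈ antidiagonal (n + 1), catalan (2 * ij.1) * catalan (2 * ij.2)
        = 8 * (2 * n + 1) * (4 ^ n * catalan n) := by
          rw [add_two_mul_sum_catalan_two_mul_succ, ih]
      _ = 4 ^ (n + 1) * (2 * (2 * n + 1) * catalan n) := by ring
      _ = (n + 2) * (4 ^ (n + 1) * catalan (n + 1)) := by
          rw [← add_two_mul_catalan_succ]; ring
end

section
/- For every nonnegative integer n, the sum over all pairs of nonnegative integers (i, j) with i + j = n of C_{2i} · B_{2j} equals 4^n · B_n, where C_m denotes the m-th Catalan number and B_m = binom(2m, m) is the m-th central binomial coefficient. -/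
/-!
Work with generating functions in `ℤ⟦X⟧`: `B = ∑ B_m X^m` and `C = ∑ C_m X^m`. Comparing
derivatives gives `B² (1 - 4X) = 1`, and `2 C_m = 4 B_m - B_{m+1}` gives `2X C = 1 - (1 - 4X) B`.
Since `B(X) B(-X)` and `B(4X²)` both square to `(1 - 16X²)⁻¹` and have constant term `1`, they are
equal. As the even part of `f` is `(f(X) + f(-X)) / 2`, the theorem says
`(C(X) + C(-X)) (B(X) + B(-X)) = 4 B(X) B(-X)`, and after multiplication by `2X` this is an
algebraic consequence of the relations above.
-/

theorem two_mul_catalan_add_centralBinom_succ (n : ℕ) :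
    2 * catalan n + (n + 1).centralBinom = 4 * n.centralBinom := by
  apply Nat.eq_of_mul_eq_mul_left (by omega : 0 < n + 1)
  have hC := succ_mul_catalan_eq_centralBinom n
  have hB := Nat.succ_mul_centralBinom_succ n
  linear_combination 2 * hC + hB

namespace PowerSeries

section CommRing

variable {R : Type*} [CommRing R]

@[simp]
theorem coeff_ofNat_mul (a n : ℕ) [a.AtLeastTwo] (f : R⟦X⟧) :
    coeff n ((ofNat(a) : R⟦X⟧) * f) = ofNat(a) * coeff n f := by
  rw [← map_ofNat C a, coeff_C_mul]

@[simp]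
theorem constantCoeff_rescale (a : R) (f : R⟦X⟧) :
    constantCoeff (rescale a f) = constantCoeff f := by
  rw [← coeff_zero_eq_constantCoeff_apply, ← coeff_zero_eq_constantCoeff_apply, coeff_rescale,
    pow_zero, one_mul]

theorem expand_injective (p : ℕ) (hp : p ≠ 0) :
    Function.Injective (expand p hp : R⟦X⟧ → R⟦X⟧) := by
  intro f g h
  ext m
  simpa using congrArg (coeff (p * m)) h

/-- `∑ a_{2n} X^n`, so that `expand 2 (evenPart f)` is the even part of `f` in the usual sense. -/
noncomputable def evenPart (f : R⟦X⟧) : R⟦X⟧ := mk fun n => coeff (2 * n) f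

@[simp]
theorem coeff_evenPart (f : R⟦X⟧) (n : ℕ) : coeff n (evenPart f) = coeff (2 * n) f :=
  coeff_mk _ _

theorem two_mul_expand_evenPart (f : R⟦X⟧) :
    2 * expand 2 two_ne_zero (evenPart f) = f + rescale (-1) f := by
  ext m
  rw [two_mul, map_add, map_add, coeff_rescale]
  rcases Nat.even_or_odd' m with ⟨k, rfl | rfl⟩
  · simp [pow_mul]
  · rw [coeff_expand_of_not_dvd _ _ _ (by omega), pow_succ, pow_mul]
    simp

theorem eq_of_sq_eq_sq [IsDomain R] [NeZero (2 : R)] {f g : R⟦X⟧} (h : f ^ 2 = g ^ 2)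
    (hc : constantCoeff f = constantCoeff g) (hc0 : constantCoeff f ≠ 0) : f = g := by
  have hsum : f + g ≠ 0 := fun h0 => by
    have := congrArg constantCoeff h0
    rw [map_add, ← hc, ← two_mul, map_zero] at this
    exact mul_ne_zero two_ne_zero hc0 this
  have : (f - g) * (f + g) = 0 := by linear_combination h
  exact sub_eq_zero.mp ((mul_eq_zero.mp this).resolve_right hsum)

end CommRing

noncomputable def centralBinomSeries : ℤ⟦X⟧ := mk fun n => (n.centralBinom : ℤ)

@[simp]
theorem coeff_centralBinomSeries (n : ℕ) : coeff n centralBinomSeries = n.centralBinom :=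
  coeff_mk _ _

@[simp]
theorem constantCoeff_centralBinomSeries : constantCoeff centralBinomSeries = 1 := by
  simp [← coeff_zero_eq_constantCoeff_apply]

theorem one_sub_four_X_mul_derivative_centralBinomSeries :
    (1 - 4 * X) * d⁄dX ℤ centralBinomSeries = 2 * centralBinomSeries := by
  ext n
  rcases n with _ | n
  · have := coeff_derivative centralBinomSeries 0
    simp_all [Nat.centralBinom, Nat.choose]
  · rw [sub_mul, map_sub, one_mul, mul_assoc, coeff_ofNat_mul, coeff_succ_X_mul]
    simp only [coeff_derivative, coeff_centralBinomSeries, coeff_ofNat_mul]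
    have h : ((n + 2 : ℕ) : ℤ) * (n + 2).centralBinom =
        2 * (2 * (n + 1 : ℕ) + 1) * (n + 1).centralBinom := by
      exact_mod_cast Nat.succ_mul_centralBinom_succ (n + 1)
    push_cast at h ⊢
    linear_combination h

theorem centralBinomSeries_sq_mul_one_sub_four_X :
    centralBinomSeries ^ 2 * (1 - 4 * X) = 1 := by
  apply derivative.ext
  · have h4 : d⁄dX ℤ (4 : ℤ⟦X⟧) = 0 := by exact_mod_cast (d⁄dX ℤ).map_natCast 4
    simp only [Derivation.leibniz, derivative_pow, map_sub, derivative_one, derivative_X, h4,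
      smul_eq_mul]
    linear_combination 2 * centralBinomSeries * one_sub_four_X_mul_derivative_centralBinomSeries
  · simp

theorem rescale_neg_one_centralBinomSeries_sq_mul_one_add_four_X :
    (rescale (-1) centralBinomSeries) ^ 2 * (1 + 4 * X) = 1 := by
  simpa [rescale_neg_one_X, map_ofNat] using
    congrArg (rescale (-1)) centralBinomSeries_sq_mul_one_sub_four_X

theorem centralBinomSeries_mul_rescale_neg_one :
    centralBinomSeries * rescale (-1) centralBinomSeries =
      expand 2 two_ne_zero (rescale 4 centralBinomSeries) := by
  set B := centralBinomSeries
  set E := expand 2 two_ne_zero (rescale 4 B)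
  have hB := centralBinomSeries_sq_mul_one_sub_four_X
  have hB' := rescale_neg_one_centralBinomSeries_sq_mul_one_add_four_X
  have hprod : (B * rescale (-1) B) ^ 2 * (1 - 16 * X ^ 2) = 1 := by
    linear_combination (rescale (-1) B ^ 2 * (1 + 4 * X)) * hB + hB'
  have hE : E ^ 2 * (1 - 16 * X ^ 2) = 1 := by
    have := congrArg (fun f => expand 2 two_ne_zero (rescale 4 f)) hB
    simp only [map_mul, map_pow, map_sub, map_one, map_ofNat, rescale_X, expand_X] at this
    linear_combination this
  apply eq_of_sq_eq_sq
  · linear_combination E ^ 2 * hprod - (B * rescale (-1) B) ^ 2 * hE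
  · simp [B, E]
  · simp [B]

theorem two_mul_X_mul_catalanSeries :
    2 * X * catalanSeries.map (Nat.castRingHom ℤ) = 1 - (1 - 4 * X) * centralBinomSeries := by
  ext n
  rcases n with _ | n
  · simp
  · rw [mul_comm 2, mul_assoc, coeff_succ_X_mul, sub_mul, one_mul, mul_assoc, map_sub, map_sub,
      coeff_ofNat_mul, coeff_ofNat_mul, coeff_succ_X_mul, coeff_one, if_neg n.add_one_ne_zero]
    simp only [coeff_map, catalanSeries_coeff, coeff_centralBinomSeries]
    have h : (2 * catalan n + (n + 1).centralBinom : ℤ) = 4 * n.centralBinom := by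
      exact_mod_cast two_mul_catalan_add_centralBinom_succ n
    linear_combination h

theorem evenPart_catalanSeries_mul_evenPart_centralBinomSeries :
    evenPart (catalanSeries.map (Nat.castRingHom ℤ)) * evenPart centralBinomSeries =
      rescale 4 centralBinomSeries := by
  set C := catalanSeries.map (Nat.castRingHom ℤ)
  set B := centralBinomSeries
  have hC := two_mul_X_mul_catalanSeries
  have hC' : -(2 * X * rescale (-1) C) = 1 - (1 + 4 * X) * rescale (-1) B := by
    simpa [rescale_neg_one_X, map_ofNat] using congrArg (rescale (-1)) hC
  have hB := centralBinomSeries_sq_mul_one_sub_four_X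
  have hB' := rescale_neg_one_centralBinomSeries_sq_mul_one_add_four_X
  have h8X : (8 * X : ℤ⟦X⟧) ≠ 0 :=
    mul_ne_zero (fun h => by simpa [map_ofNat constantCoeff] using congrArg constantCoeff h)
      X_ne_zero
  apply expand_injective 2 two_ne_zero
  rw [map_mul, ← centralBinomSeries_mul_rescale_neg_one]
  apply mul_left_cancel₀ h8X
  linear_combination 2 * X * (2 * expand 2 two_ne_zero (evenPart B)) * two_mul_expand_evenPart C +
    2 * X * (C + rescale (-1) C) * two_mul_expand_evenPart B + (B + rescale (-1) B) * hC -
    (B + rescale (-1) B) * hC' - hB + hB'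

end PowerSeries

open PowerSeries in
/-- For every nonnegative integer `n`, `∑_{i+j=n} C_{2i} B_{2j} = 4^n B_n`, where `C_m` is
the `m`-th Catalan number and `B_m = binom(2m, m)` is the `m`-th central binomial coefficient. -/
theorem catalan_centralBinom_convolution (n : ℕ) :
    ∑ ij ∈ Finset.HasAntidiagonal.antidiagonal n, catalan (2 * ij.1) * Nat.centralBinom (2 * ij.2) =
      4 ^ n * Nat.centralBinom n := by
  have h := congrArg (coeff n) evenPart_catalanSeries_mul_evenPart_centralBinomSeries
  simp only [coeff_mul, coeff_evenPart, coeff_map, catalanSeries_coeff, coeff_centralBinomSeries,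
    coeff_rescale] at h
  rw [← Nat.cast_inj (R := ℤ)]
  push_cast at h ⊢
  exact h
end

section
/- For every nonnegative integer n, the sum over all pairs of nonnegative integers (i, j) with i + j = n of C_{2i} · B_{2j} equals (n + 1) times the sum over all pairs (i, j) with i + j = n of C_{2i} · C_{2j}. -/
/-!
Since `B_m = (m + 1) C_m`, the left side is `∑_{i+j=n} (2j + 1) C_{2i} C_{2j}`. The summand
`C_{2i} C_{2j}` is symmetric in `i` and `j`, so the weight `2j` may be replaced by its average
`i + j = n`, which leaves `(n + 1) ∑_{i+j=n} C_{2i} C_{2j}`.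
-/

open Finset

theorem Finset.Nat.two_mul_sum_antidiagonal_snd_mul {R : Type*} [CommSemiring R] (a : ℕ → R)
    (n : ℕ) :
    2 * ∑ ij ∈ antidiagonal n, (ij.2 : R) * (a ij.1 * a ij.2) =
      n * ∑ ij ∈ antidiagonal n, a ij.1 * a ij.2 := by
  have hswap : ∑ ij ∈ antidiagonal n, (ij.2 : R) * (a ij.1 * a ij.2) =
      ∑ ij ∈ antidiagonal n, (ij.1 : R) * (a ij.1 * a ij.2) := by
    rw [← Finset.Nat.sum_antidiagonal_swap]
    exact sum_congr rfl fun ij _ => by simp only [Prod.fst_swap, Prod.snd_swap]; ring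
  calc 2 * ∑ ij ∈ antidiagonal n, (ij.2 : R) * (a ij.1 * a ij.2)
      = ∑ ij ∈ antidiagonal n, ((ij.1 + ij.2 : ℕ) : R) * (a ij.1 * a ij.2) := by
        rw [two_mul]
        nth_rw 1 [hswap]
        rw [← sum_add_distrib]
        simp only [Nat.cast_add, add_mul]
    _ = n * ∑ ij ∈ antidiagonal n, a ij.1 * a ij.2 := by
        rw [mul_sum]
        exact sum_congr rfl fun ij hij => by rw [mem_antidiagonal.mp hij]

/-- For every nonnegative integer `n`,
`∑_{i+j=n} C_{2i} B_{2j} = (n+1) ∑_{i+j=n} C_{2i} C_{2j}`. -/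
theorem catalan_centralBinom_convolution_eq (n : ℕ) :
    ∑ ij ∈ Finset.HasAntidiagonal.antidiagonal n, catalan (2 * ij.1) * Nat.centralBinom (2 * ij.2) =
      (n + 1) * ∑ ij ∈ Finset.HasAntidiagonal.antidiagonal n, catalan (2 * ij.1) * catalan (2 * ij.2) := by
  have hweight := Finset.Nat.two_mul_sum_antidiagonal_snd_mul (fun k => catalan (2 * k)) n
  simp only [Nat.cast_id] at hweight
  calc ∑ ij ∈ antidiagonal n, catalan (2 * ij.1) * Nat.centralBinom (2 * ij.2)
      = ∑ ij ∈ antidiagonal n, (2 * (ij.2 * (catalan (2 * ij.1) * catalan (2 * ij.2)))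
          + catalan (2 * ij.1) * catalan (2 * ij.2)) := by
        refine sum_congr rfl fun ij _ => ?_
        rw [← succ_mul_catalan_eq_centralBinom]
        ring
    _ = (n + 1) * ∑ ij ∈ antidiagonal n, catalan (2 * ij.1) * catalan (2 * ij.2) := by
        rw [sum_add_distrib, ← mul_sum, hweight, add_one_mul]
end

section
/- For every nonnegative integer n, the number of balanced 2n-paths that are even-zeroed equals C_{2n}, the (2n)-th Catalan number. -/
/-!
Cut a nonempty balanced path at its first return to the axis: it splits uniquely into a
primitive block (nonempty, balanced, never on the axis in between) and a balanced rest, and it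
is even-zeroed iff the block has length divisible by `4` and the rest is even-zeroed. A
primitive block of length `2(t+1)` has constant sign inside, so it is `U d D` or its mirror
image for a Dyck word `d` of semilength `t`: there are `2 C_t` of them. Writing `E m` for the
number of even-zeroed balanced paths of length `2m`, this gives
`E (m+1) = ∑_{i+j=m, i odd} 2 C_i E j`.
For `N` odd exactly one of `i, j` is odd in each term of `C_{N+1} = ∑_{i+j=N} C_i C_j`, so by
the symmetry `i ↔ j` also `C_{N+1} = ∑_{i+j=N, i odd} 2 C_i C_j`. Since `i` odd forces `j`
even, induction gives `E (2n) = C_{2n}`.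
-/

/-- A path of length `l` is a sequence of `l` steps, each `+1` (up, `true`) or `-1`
(down, `false`). `psum p k` is the partial sum of the first `k` steps of `p`
(the height of the path after `k` steps). -/
def psum {l : ℕ} (p : Fin l → Bool) (k : ℕ) : ℤ :=
  ∑ i ∈ Finset.univ.filter (fun i : Fin l => (i : ℕ) < k), (if p i then (1 : ℤ) else -1)

/-- A path is even-zeroed if every index at which its partial sum is `0`
(i.e., every `x`-intercept) is divisible by `4`. -/
def IsEvenZeroed {l : ℕ} (p : Fin l → Bool) : Prop :=
  ∀ k ≤ l, psum p k = 0 → 4 ∣ k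

/-- A path of length `2m` is balanced if its total sum of steps is `0`
(equivalently, it has `m` up-steps and `m` down-steps). -/
def IsBalanced {l : ℕ} (p : Fin l → Bool) : Prop :=
  psum p l = 0

open DyckStep Finset

instance : Fintype DyckStep where
  elems := {U, D}
  complete s := by cases s <;> simp

theorem catalan_succ_of_odd {N : ℕ} (hN : Odd N) :
    catalan (N + 1) =
      ∑ x ∈ antidiagonal N, (if Odd x.1 then 2 * catalan x.1 else 0) * catalan x.2 := by
  let g (x : ℕ × ℕ) : ℕ := if Odd x.1 then catalan x.1 * catalan x.2 else 0
  have hsplit : ∀ x ∈ antidiagonal N, catalan x.1 * catalan x.2 = g x + g x.swap := by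
    intro x hx
    have hx := mem_antidiagonal.mp hx
    rw [Nat.odd_iff] at hN
    by_cases h : Odd x.1
    · have h2 : ¬Odd x.2 := by rw [Nat.odd_iff] at h ⊢; omega
      simp [g, h, h2]
    · have h2 : Odd x.2 := by rw [Nat.not_odd_iff] at h; rw [Nat.odd_iff]; omega
      simp [g, h, h2, mul_comm]
  calc catalan (N + 1) = ∑ x ∈ antidiagonal N, (g x + g x.swap) := by
        rw [catalan_succ']; exact sum_congr rfl hsplit
    _ = 2 * ∑ x ∈ antidiagonal N, g x := by
        rw [sum_add_distrib, Nat.sum_antidiagonal_swap (f := g)]; ring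
    _ = _ := by
        rw [mul_sum]
        refine sum_congr rfl fun x _ => ?_
        simp only [g]
        split_ifs <;> ring

namespace StepList

def stepValue : DyckStep → ℤ
  | U => 1
  | D => -1

def height (w : List DyckStep) : ℤ := (w.map stepValue).sum

def IsEvenZeroed (w : List DyckStep) : Prop :=
  ∀ k ≤ w.length, height (w.take k) = 0 → 4 ∣ k

def IsPrimitive (w : List DyckStep) : Prop :=
  w ≠ [] ∧ height w = 0 ∧ ∀ k, 0 < k → k < w.length → height (w.take k) ≠ 0

@[simp] lemma height_nil : height [] = 0 := rfl

@[simp] lemma height_cons (s : DyckStep) (w : List DyckStep) :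
    height (s :: w) = stepValue s + height w := by
  simp [height]

@[simp] lemma height_append (a b : List DyckStep) : height (a ++ b) = height a + height b := by
  simp [height]

lemma height_eq_count_sub_count (w : List DyckStep) : height w = w.count U - w.count D := by
  induction w with
  | nil => simp
  | cons s w ih =>
    cases s <;>
      simp only [height_cons, stepValue, ih, List.count_cons_self, List.count_cons_of_ne,
        ne_eq, reduceCtorEq, not_false_eq_true, Nat.cast_add, Nat.cast_one] <;> ring

lemma length_eq_count_add_count (w : List DyckStep) : w.length = w.count U + w.count D := by
  induction w with
  | nil => rfl
  | cons s w ih =>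
    cases s <;>
      simp only [List.length_cons, ih, List.count_cons_self, List.count_cons_of_ne, ne_eq,
        reduceCtorEq, not_false_eq_true] <;> omega

lemma length_eq_two_mul_count_of_height_eq_zero {w : List DyckStep} (h : height w = 0) :
    w.length = 2 * w.count U := by
  rw [height_eq_count_sub_count] at h
  have := length_eq_count_add_count w
  omega

lemma height_take_succ {w : List DyckStep} {k : ℕ} (hk : k < w.length) :
    height (w.take (k + 1)) = height (w.take k) + stepValue w[k] := by
  rw [List.take_add_one, List.getElem?_eq_getElem hk, Option.toList_some, height_append]
  simp [height]

lemma height_take_append_of_le {a : List DyckStep} (b : List DyckStep) {k : ℕ}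
    (hk : a.length ≤ k) :
    height ((a ++ b).take k) = height a + height (b.take (k - a.length)) := by
  simp [List.take_append, List.take_of_length_le hk]

lemma isEvenZeroed_append {a b : List DyckStep} (ha : height a = 0) :
    IsEvenZeroed (a ++ b) ↔ IsEvenZeroed a ∧ IsEvenZeroed b := by
  constructor
  · intro h
    have h4 : 4 ∣ a.length := h a.length (by simp) (by simpa using ha)
    refine ⟨fun k hk hz => h k (by simp only [List.length_append]; omega)
      (by rwa [List.take_append_of_le_length hk]), fun k hk hz => ?_⟩
    have := h (a.length + k) (by simp only [List.length_append]; omega)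
      (by rw [height_take_append_of_le _ (by omega), ha]; simpa using hz)
    omega
  · rintro ⟨hA, hB⟩ k hk hz
    rcases le_or_gt k a.length with hka | hka
    · exact hA k hka (by rwa [List.take_append_of_le_length hka] at hz)
    · have h4 := hA a.length le_rfl (by rwa [List.take_length])
      rw [height_take_append_of_le _ hka.le, ha, zero_add] at hz
      have := hB (k - a.length) (by simp only [List.length_append] at hk; omega) hz
      omega

lemma IsPrimitive.isEvenZeroed_iff {a : List DyckStep} (ha : IsPrimitive a) :
    IsEvenZeroed a ↔ 4 ∣ a.length := by
  refine ⟨fun h => h _ le_rfl (by rw [List.take_length]; exact ha.2.1), fun h4 k hk hz => ?_⟩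
  rcases Nat.eq_zero_or_pos k with rfl | hk0
  · exact dvd_zero 4
  rcases hk.eq_or_lt with rfl | hlt
  · exact h4
  · exact absurd hz (ha.2.2 k hk0 hlt)

lemma exists_isPrimitive_append {w : List DyckStep} (hw : w ≠ []) (h : height w = 0) :
    ∃ a b, IsPrimitive a ∧ w = a ++ b := by
  have hw0 : 0 < w.length := List.length_pos_iff.mpr hw
  have hex : ∃ k, 0 < k ∧ height (w.take k) = 0 :=
    ⟨w.length, hw0, by rwa [List.take_length]⟩
  obtain ⟨hk0, hkz⟩ := Nat.find_spec hex
  have hkw : Nat.find hex ≤ w.length := Nat.find_min' hex ⟨hw0, by rwa [List.take_length]⟩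
  refine ⟨w.take (Nat.find hex), w.drop (Nat.find hex), ⟨?_, hkz, fun i hi0 hi hiz => ?_⟩,
    (List.take_append_drop _ w).symm⟩
  · exact List.ne_nil_of_length_pos (by rw [List.length_take]; omega)
  · rw [List.length_take] at hi
    rw [List.take_take, min_eq_left (by omega)] at hiz
    exact Nat.find_min hex (by omega) ⟨hi0, hiz⟩

lemma IsPrimitive.append_inj {a a' b b' : List DyckStep} (ha : IsPrimitive a)
    (ha' : IsPrimitive a') (h : a ++ b = a' ++ b') : a = a' ∧ b = b' := by
  have length_le : ∀ {c c' d d' : List DyckStep}, IsPrimitive c → IsPrimitive c' →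
      c ++ d = c' ++ d' → c'.length ≤ c.length := by
    intro c c' d d' hc hc' h
    by_contra! hlt
    have hpre : c'.take c.length = c := by
      simpa [List.take_append_of_le_length hlt.le] using (congrArg (List.take c.length) h).symm
    exact hc'.2.2 c.length (List.length_pos_iff.mpr hc.1) hlt (by rw [hpre]; exact hc.2.1)
  exact List.append_inj h (le_antisymm (length_le ha' ha h.symm) (length_le ha ha' h))

lemma IsPrimitive.height_take_pos {a : List DyckStep} (ha : IsPrimitive a)
    (hU : a.head? = some U) {k : ℕ} (hk0 : 0 < k) (hk : k < a.length) :
    0 < height (a.take k) := by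
  induction k with
  | zero => omega
  | succ k ih =>
    rcases Nat.eq_zero_or_pos k with rfl | hk0'
    · obtain ⟨s, w, rfl⟩ := List.exists_cons_of_ne_nil ha.1
      obtain rfl : s = U := by simpa using hU
      simp [stepValue]
    · have hpos := ih hk0' (by omega)
      have hne := ha.2.2 (k + 1) hk0 hk
      rw [height_take_succ (by omega)] at hne ⊢
      generalize a[k] = s at hne ⊢
      cases s <;> simp only [stepValue] at hne ⊢ <;> omega

lemma IsPrimitive.exists_nest_eq {a : List DyckStep} (ha : IsPrimitive a)
    (hU : a.head? = some U) : ∃ d : DyckWord, d.nest.toList = a := by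
  have hpos (i : ℕ) (hi0 : 0 < i) (hi : i < a.length) :
      (a.take i).count D < (a.take i).count U := by
    have := ha.height_take_pos hU hi0 hi
    rw [height_eq_count_sub_count] at this
    omega
  have hbal : a.count U = a.count D := by
    have := ha.2.1
    rw [height_eq_count_sub_count] at this
    omega
  let p : DyckWord := ⟨a, hbal, fun i => by
    rcases Nat.eq_zero_or_pos i with rfl | hi0
    · simp
    rcases lt_or_ge i a.length with hi | hi
    · exact (hpos i hi0 hi).le
    · rw [List.take_of_length_le hi, hbal]⟩
  have hn : p.IsNested := ⟨fun h => ha.1 (congrArg DyckWord.toList h), hpos⟩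
  exact ⟨p.denest hn, congrArg DyckWord.toList (p.nest_denest hn)⟩

lemma isPrimitive_nest (d : DyckWord) : IsPrimitive d.nest.toList := by
  obtain ⟨hne, hpos⟩ := DyckWord.IsNested.nest (p := d)
  refine ⟨fun h => hne (DyckWord.ext h), ?_, fun k hk0 hk => ?_⟩
  · rw [height_eq_count_sub_count, d.nest.count_U_eq_count_D, sub_self]
  · have := hpos hk0 hk
    rw [height_eq_count_sub_count]
    omega

lemma _root_.DyckWord.nest_injective : Function.Injective DyckWord.nest := fun d d' h => by
  simpa [DyckWord.ext_iff, DyckWord.nest] using h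

lemma length_nest (d : DyckWord) : d.nest.toList.length = 2 * (d.semilength + 1) := by
  rw [← DyckWord.two_mul_semilength_eq_length, DyckWord.semilength_nest]

def flipStep : DyckStep → DyckStep
  | U => D
  | D => U

lemma stepValue_flipStep (s : DyckStep) : stepValue (flipStep s) = -stepValue s := by
  cases s <;> rfl

def reflect (w : List DyckStep) : List DyckStep := w.map flipStep

lemma flipStep_involutive : Function.Involutive flipStep := by
  intro s
  cases s <;> rfl

@[simp] lemma reflect_reflect (w : List DyckStep) : reflect (reflect w) = w := by
  simp [reflect, flipStep_involutive.comp_self]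

lemma reflect_injective : Function.Injective reflect :=
  Function.LeftInverse.injective reflect_reflect

@[simp] lemma length_reflect (w : List DyckStep) : (reflect w).length = w.length :=
  List.length_map _

@[simp] lemma height_reflect (w : List DyckStep) : height (reflect w) = -height w := by
  induction w with
  | nil => rfl
  | cons s w ih =>
    rw [reflect, List.map_cons, height_cons, height_cons, ← reflect, ih, stepValue_flipStep]
    ring

lemma take_reflect (w : List DyckStep) (k : ℕ) : (reflect w).take k = reflect (w.take k) :=
  List.map_take.symm

lemma IsPrimitive.reflect {a : List DyckStep} (ha : IsPrimitive a) : IsPrimitive (reflect a) := by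
  refine ⟨by simpa [StepList.reflect] using ha.1, by simp [ha.2.1], fun k hk0 hk => ?_⟩
  rw [take_reflect, height_reflect, neg_ne_zero]
  exact ha.2.2 k hk0 (by simpa using hk)

theorem card_isPrimitive (t : ℕ) :
    Nat.card {a : List DyckStep // a.length = 2 * (t + 1) ∧ IsPrimitive a} = 2 * catalan t := by
  let f (x : Bool × {d : DyckWord // d.semilength = t}) :
      {a : List DyckStep // a.length = 2 * (t + 1) ∧ IsPrimitive a} :=
    if x.1 then ⟨x.2.1.nest.toList, by rw [length_nest, x.2.2], isPrimitive_nest _⟩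
    else ⟨reflect x.2.1.nest.toList, by rw [length_reflect, length_nest, x.2.2],
      (isPrimitive_nest _).reflect⟩
  have hf : Function.Bijective f := by
    constructor
    · rintro ⟨s, d, hd⟩ ⟨s', d', hd'⟩ h
      replace h := congrArg Subtype.val h
      obtain rfl : s = s' := by
        have := congrArg List.head? h
        cases s <;> cases s' <;> simp_all [f, DyckWord.nest, reflect, flipStep]
      obtain rfl : d = d' := by
        cases s
        · exact DyckWord.nest_injective (DyckWord.ext (reflect_injective h))
        · exact DyckWord.nest_injective (DyckWord.ext h)
      rfl
    · rintro ⟨a, hl, ha⟩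
      obtain ⟨s, w, rfl⟩ := List.exists_cons_of_ne_nil ha.1
      cases s
      · obtain ⟨d, hd⟩ := ha.exists_nest_eq rfl
        refine ⟨(true, ⟨d, ?_⟩), Subtype.ext hd⟩
        have := length_nest d
        rw [hd, hl] at this
        omega
      · obtain ⟨d, hd⟩ := ha.reflect.exists_nest_eq rfl
        refine ⟨(false, ⟨d, ?_⟩), Subtype.ext (by simp [f, hd])⟩
        have := length_nest d
        rw [hd, length_reflect, hl] at this
        omega
  rw [← Nat.card_eq_of_bijective f hf, Nat.card_prod, Nat.card_eq_fintype_card (α := {d // _}),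
    DyckWord.card_dyckWord_semilength_eq_catalan]
  simp

lemma card_isPrimitive_isEvenZeroed (t : ℕ) :
    Nat.card {a : List DyckStep // a.length = 2 * (t + 1) ∧ IsPrimitive a ∧ IsEvenZeroed a} =
      if Odd t then 2 * catalan t else 0 := by
  have h4 : 4 ∣ 2 * (t + 1) ↔ Odd t := by
    rw [Nat.odd_iff]
    omega
  have key (a : List DyckStep) : a.length = 2 * (t + 1) ∧ IsPrimitive a ∧ IsEvenZeroed a ↔
      (a.length = 2 * (t + 1) ∧ IsPrimitive a) ∧ Odd t := by
    rw [← h4]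
    constructor
    · rintro ⟨hl, ha, hez⟩
      exact ⟨⟨hl, ha⟩, hl ▸ ha.isEvenZeroed_iff.mp hez⟩
    · rintro ⟨⟨hl, ha⟩, h⟩
      exact ⟨hl, ha, ha.isEvenZeroed_iff.mpr (hl ▸ h)⟩
  simp_rw [key]
  split_ifs with ht
  · simp only [ht, and_true]
    exact card_isPrimitive t
  · simp [ht]

instance (L : ℕ) (P : List DyckStep → Prop) :
    Finite {w : List DyckStep // w.length = L ∧ P w} :=
  ((List.finite_length_eq DyckStep L).subset fun _ hw => hw.1).to_subtype

noncomputable def evenZeroedCount (m : ℕ) : ℕ :=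
  Nat.card {w : List DyckStep // w.length = 2 * m ∧ height w = 0 ∧ IsEvenZeroed w}

lemma evenZeroedCount_zero : evenZeroedCount 0 = 1 := by
  rw [evenZeroedCount, Nat.card_eq_one_iff_exists]
  refine ⟨⟨[], rfl, rfl, fun k hk _ => by simp_all⟩, fun ⟨w, hw, _⟩ => ?_⟩
  exact Subtype.ext (List.eq_nil_of_length_eq_zero hw)

lemma evenZeroedCount_succ (m : ℕ) :
    evenZeroedCount (m + 1) = ∑ x ∈ antidiagonal m,
      (if Odd x.1 then 2 * catalan x.1 else 0) * evenZeroedCount x.2 := by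
  let f (x : Σ x : antidiagonal m,
      {a : List DyckStep // a.length = 2 * (x.1.1 + 1) ∧ IsPrimitive a ∧ IsEvenZeroed a} ×
      {b : List DyckStep // b.length = 2 * x.1.2 ∧ height b = 0 ∧ IsEvenZeroed b}) :
      {w : List DyckStep // w.length = 2 * (m + 1) ∧ height w = 0 ∧ IsEvenZeroed w} :=
    ⟨x.2.1.1 ++ x.2.2.1, by
      obtain ⟨hal, ha, haz⟩ := x.2.1.2
      obtain ⟨hbl, hb, hbz⟩ := x.2.2.2
      have hij := mem_antidiagonal.mp x.1.2
      exact ⟨by rw [List.length_append]; omega, by simp [ha.2.1, hb],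
        (isEvenZeroed_append ha.2.1).mpr ⟨haz, hbz⟩⟩⟩
  have hf : Function.Bijective f := by
    constructor
    · rintro ⟨⟨⟨i, j⟩, hij⟩, a, b⟩ ⟨⟨⟨i', j'⟩, hij'⟩, a', b'⟩ h
      obtain ⟨ha, hb⟩ := a.2.2.1.append_inj a'.2.2.1 (congrArg Subtype.val h)
      have hi : 2 * (i + 1) = 2 * (i' + 1) :=
        a.2.1.symm.trans ((congrArg List.length ha).trans a'.2.1)
      have := mem_antidiagonal.mp hij
      have := mem_antidiagonal.mp hij'
      obtain rfl : i = i' := by omega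
      obtain rfl : j = j' := by omega
      obtain rfl := Subtype.ext ha
      obtain rfl := Subtype.ext hb
      rfl
    · rintro ⟨w, hl, hw, hwz⟩
      obtain ⟨a, b, ha, rfl⟩ :=
        exists_isPrimitive_append (List.ne_nil_of_length_pos (by omega)) hw
      have hb : height b = 0 := by simpa [ha.2.1] using hw
      obtain ⟨haz, hbz⟩ := (isEvenZeroed_append ha.2.1).mp hwz
      have hal := length_eq_two_mul_count_of_height_eq_zero ha.2.1
      have hbl := length_eq_two_mul_count_of_height_eq_zero hb
      have ha0 := List.length_pos_iff.mpr ha.1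
      rw [List.length_append] at hl
      refine ⟨⟨⟨⟨a.count U - 1, b.count U⟩, mem_antidiagonal.mpr (by omega)⟩,
        ⟨a, by dsimp only; omega, ha, haz⟩, ⟨b, hbl, hb, hbz⟩⟩, rfl⟩
  rw [evenZeroedCount, ← Nat.card_eq_of_bijective f hf, Nat.card_sigma]
  simp only [Nat.card_prod, card_isPrimitive_isEvenZeroed]
  exact sum_coe_sort (antidiagonal m)
    fun x => (if Odd x.1 then 2 * catalan x.1 else 0) * evenZeroedCount x.2

lemma evenZeroedCount_two_mul (n : ℕ) : evenZeroedCount (2 * n) = catalan (2 * n) := by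
  induction n using Nat.strong_induction_on with
  | _ n ih =>
  rcases n with _ | n
  · simpa using evenZeroedCount_zero
  rw [show 2 * (n + 1) = 2 * n + 1 + 1 by ring, evenZeroedCount_succ,
    catalan_succ_of_odd (odd_two_mul_add_one n)]
  refine sum_congr rfl fun x hx => ?_
  split_ifs with hodd
  · have hx := mem_antidiagonal.mp hx
    obtain ⟨j, hj⟩ : Even x.2 := by rw [Nat.odd_iff] at hodd; rw [Nat.even_iff]; omega
    rw [hj, ← two_mul, ih j (by omega)]
  · rw [zero_mul, zero_mul]

end StepList

def toSteps {l : ℕ} (p : Fin l → Bool) : List DyckStep :=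
  List.ofFn fun i => if p i then U else D

lemma psum_eq_height_take {l : ℕ} (p : Fin l → Bool) (k : ℕ) :
    psum p k = StepList.height ((toSteps p).take k) := by
  rw [psum, ← List.sum_take_ofFn, StepList.height, List.map_take, toSteps, List.map_ofFn]
  congr 3
  funext i
  simp only [Function.comp_apply]
  split <;> rfl

lemma length_toSteps {l : ℕ} (p : Fin l → Bool) : (toSteps p).length = l :=
  List.length_ofFn

lemma isBalanced_iff {l : ℕ} (p : Fin l → Bool) :
    IsBalanced p ↔ StepList.height (toSteps p) = 0 := by
  rw [IsBalanced, psum_eq_height_take, List.take_of_length_le (length_toSteps p).le]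

lemma isEvenZeroed_iff {l : ℕ} (p : Fin l → Bool) :
    IsEvenZeroed p ↔ StepList.IsEvenZeroed (toSteps p) := by
  simp only [IsEvenZeroed, StepList.IsEvenZeroed, psum_eq_height_take, length_toSteps]

lemma toSteps_injective (l : ℕ) : Function.Injective (toSteps (l := l)) := by
  intro p q h
  funext i
  have := congrFun (List.ofFn_injective h) i
  cases hp : p i <;> cases hq : q i <;> simp_all

lemma exists_toSteps_eq {l : ℕ} {w : List DyckStep} (hw : w.length = l) :
    ∃ p : Fin l → Bool, toSteps p = w := by
  subst hw
  refine ⟨fun i => w[i] = U, List.ext_getElem (length_toSteps _) fun i _ _ => ?_⟩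
  simp only [toSteps, List.getElem_ofFn, decide_eq_true_eq]
  generalize w[i] = s
  cases s <;> simp

lemma card_isBalanced_isEvenZeroed (l : ℕ) :
    Nat.card {p : Fin l → Bool // IsBalanced p ∧ IsEvenZeroed p} =
      Nat.card {w : List DyckStep //
        w.length = l ∧ StepList.height w = 0 ∧ StepList.IsEvenZeroed w} := by
  refine Nat.card_eq_of_bijective (fun p => ⟨toSteps p.1, length_toSteps p.1,
    (isBalanced_iff p.1).mp p.2.1, (isEvenZeroed_iff p.1).mp p.2.2⟩) ⟨?_, ?_⟩
  · exact fun p q h => Subtype.ext (toSteps_injective l (congrArg Subtype.val h))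
  · rintro ⟨w, hl, hw, hwz⟩
    obtain ⟨p, rfl⟩ := exists_toSteps_eq hl
    exact ⟨⟨p, (isBalanced_iff p).mpr hw, (isEvenZeroed_iff p).mpr hwz⟩, rfl⟩

/-- For every nonnegative integer `n`, the number of even-zeroed balanced `2n`-paths
(balanced paths of length `2·(2n)`) equals `C_{2n}`, the `(2n)`-th Catalan number. -/
theorem card_evenZeroed_balanced (n : ℕ) :
    Nat.card {p : Fin (2 * (2 * n)) → Bool // IsBalanced p ∧ IsEvenZeroed p} =
      catalan (2 * n) := by
  rw [card_isBalanced_isEvenZeroed]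
  exact StepList.evenZeroedCount_two_mul n
end

section
/- For every nonnegative integer n, the number of paths of length 2n that never return to the x-axis after the first step (i.e., sequences of 2n steps, each +1 or −1, such that for every index k with 1 ≤ k ≤ 2n the partial sum of the first k steps is nonzero) equals B_n, the n-th central binomial coefficient. -/
/-!
Ballot argument. For a starting height `a ≥ 1`, the paths of length `m` that never hit `0` are
equinumerous with the paths whose endpoint lies in the window `(-a, a]`: both counts satisfy
`f (m + 1) a = f m (a + 1) + f m (a - 1)` (split off the first step), the window count because
`(-a - 1, a - 1]` and `(-a + 1, a + 1]` have union `(-a - 1, a + 1]` and intersection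
`(-a + 1, a - 1]`. A path of length `2n + 2` that never returns to `0` is a first step `±1`
followed by a path of length `2n + 1` avoiding `0` from height `±1`; flipping all steps shows both
signs contribute equally, and for odd length the window `(-1, 1]` only contains the endpoint `1`,
reached by `C(2n+1, n+1)` paths. Finally `2 C(2n+1, n+1) = C(2n+2, n+1)`.
-/

open Finset

def stepValue (b : Bool) : ℤ := if b then 1 else -1

lemma psum_zero {l : ℕ} (p : Fin l → Bool) : psum p 0 = 0 := by
  simp [psum]

lemma psum_cons_succ {m : ℕ} (b : Bool) (q : Fin m → Bool) (k : ℕ) :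
    psum (Fin.cons b q : Fin (m + 1) → Bool) (k + 1) = stepValue b + psum q k := by
  simp only [psum, sum_filter, Fin.sum_univ_succ, Fin.cons_zero, Fin.cons_succ, Fin.val_zero,
    Fin.val_succ, Nat.succ_lt_succ_iff, Nat.zero_lt_succ, if_true, stepValue]

lemma psum_not {l : ℕ} (p : Fin l → Bool) (k : ℕ) : psum (fun i => !p i) k = -psum p k := by
  simp only [psum, ← sum_neg_distrib]
  refine sum_congr rfl fun i _ => ?_
  by_cases h : p i <;> simp [h]

lemma psum_eq_two_mul_card_sub {l : ℕ} (p : Fin l → Bool) :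
    psum p l = 2 * #{i | p i} - l := by
  have step_eq (i : Fin l) : (if p i then (1 : ℤ) else -1) = 2 * (if p i then 1 else 0) - 1 := by
    by_cases h : p i <;> simp [h]
  rw [psum, filter_true_of_mem fun i _ => i.is_lt]
  simp only [step_eq, sum_sub_distrib, ← mul_sum, sum_boole]
  simp

lemma card_filter_card_eq_choose {α : Type*} [Fintype α] [DecidableEq α] (k : ℕ) :
    #{p : α → Bool | #{i | p i} = k} = (Fintype.card α).choose k := by
  rw [← card_univ, ← card_powersetCard]
  refine card_nbij' (fun p => ({i | p i} : Finset α)) (fun s i => i ∈ s) ?_ ?_ ?_ ?_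
  · intro p hp; simpa using hp
  · intro s hs; simp_all
  · intro p _; ext i; simp
  · intro s _; ext i; simp

lemma card_filter_fin_cons {m : ℕ} (P : (Fin (m + 1) → Bool) → Prop) [DecidablePred P] :
    #{p | P p} = #{q | P (Fin.cons true q)} + #{q | P (Fin.cons false q)} := by
  simp only [card_filter]
  rw [← (Fin.consEquiv fun _ => Bool).sum_comp, Fintype.sum_prod_type, Fintype.sum_bool]
  rfl

def AvoidsZeroFrom {m : ℕ} (a : ℤ) (p : Fin m → Bool) : Prop :=
  ∀ k < m, a + psum p (k + 1) ≠ 0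

instance {m : ℕ} (a : ℤ) : DecidablePred (AvoidsZeroFrom (m := m) a) :=
  fun p => inferInstanceAs (Decidable (∀ k < m, a + psum p (k + 1) ≠ 0))

lemma avoidsZeroFrom_cons {m : ℕ} (a : ℤ) (b : Bool) (q : Fin m → Bool) :
    AvoidsZeroFrom a (Fin.cons b q : Fin (m + 1) → Bool) ↔
      a + stepValue b ≠ 0 ∧ AvoidsZeroFrom (a + stepValue b) q := by
  simp only [AvoidsZeroFrom, Nat.forall_lt_succ_left', psum_cons_succ, psum_zero, add_zero,
    add_assoc]

lemma avoidsZeroFrom_neg {m : ℕ} (a : ℤ) (p : Fin m → Bool) :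
    AvoidsZeroFrom (-a) p ↔ AvoidsZeroFrom a (fun i => !p i) := by
  simp only [AvoidsZeroFrom, psum_not]
  refine forall₂_congr fun k _ => ?_
  omega

lemma card_avoidsZeroFrom_neg {m : ℕ} (a : ℤ) :
    #{p : Fin m → Bool | AvoidsZeroFrom (-a) p} = #{p : Fin m → Bool | AvoidsZeroFrom a p} := by
  refine card_nbij' (fun p i => !p i) (fun p i => !p i) ?_ ?_ ?_ ?_
  · intro p hp; simpa [avoidsZeroFrom_neg] using hp
  · intro p hp; simpa [avoidsZeroFrom_neg] using hp
  all_goals intro p _; simp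

lemma card_psum_window_succ {m : ℕ} {a : ℤ} (ha : 1 ≤ a) :
    #{p : Fin (m + 1) → Bool | -a < psum p (m + 1) ∧ psum p (m + 1) ≤ a} =
      #{q : Fin m → Bool | -(a + 1) < psum q m ∧ psum q m ≤ a + 1} +
        #{q : Fin m → Bool | -(a - 1) < psum q m ∧ psum q m ≤ a - 1} := by
  rw [card_filter_fin_cons, ← card_union_add_card_inter, ← filter_or, ← filter_and]
  simp only [psum_cons_succ, stepValue, if_true, Bool.false_eq_true, if_false]
  congr 2 <;> exact filter_congr fun q _ => by omega

lemma card_avoidsZeroFrom (m : ℕ) {a : ℤ} (ha : 1 ≤ a) :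
    #{p : Fin m → Bool | AvoidsZeroFrom a p} =
      #{p : Fin m → Bool | -a < psum p m ∧ psum p m ≤ a} := by
  induction m generalizing a with
  | zero =>
    congr 1
    refine filter_congr fun p _ => ?_
    simp only [AvoidsZeroFrom, not_lt_zero, IsEmpty.forall_iff, implies_true, psum_zero,
      Int.neg_neg_iff_pos, true_iff]
    omega
  | succ m ih =>
    rw [card_filter_fin_cons, card_psum_window_succ ha]
    simp only [avoidsZeroFrom_cons, stepValue, if_true, Bool.false_eq_true, if_false,
      ← sub_eq_add_neg]
    congr 1
    · rw [← ih (by omega : 1 ≤ a + 1)]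
      congr 1; ext q; simp only [and_iff_right (by omega : a + 1 ≠ 0)]
    · rcases ha.eq_or_lt with rfl | ha
      · rw [filter_false_of_mem fun q _ => by simp, filter_false_of_mem fun q _ => by omega]
      · rw [← ih (by omega : 1 ≤ a - 1)]
        congr 1; ext q; simp only [and_iff_right (by omega : a - 1 ≠ 0)]

lemma card_avoidsZeroFrom_zero_succ (m : ℕ) :
    #{p : Fin (m + 1) → Bool | AvoidsZeroFrom 0 p} =
      2 * #{q : Fin m → Bool | AvoidsZeroFrom 1 q} := by
  rw [card_filter_fin_cons]
  simp only [avoidsZeroFrom_cons, stepValue, if_true, Bool.false_eq_true, if_false, zero_add,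
    one_ne_zero, neg_ne_zero, ne_eq, not_false_eq_true, true_and, card_avoidsZeroFrom_neg]
  ring

lemma card_psum_window_one_odd (n : ℕ) :
    #{p : Fin (2 * n + 1) → Bool | -1 < psum p (2 * n + 1) ∧ psum p (2 * n + 1) ≤ 1} =
      (2 * n + 1).choose (n + 1) := by
  have card_eq := card_filter_card_eq_choose (α := Fin (2 * n + 1)) (n + 1)
  rw [Fintype.card_fin] at card_eq
  rw [← card_eq]
  exact congrArg card (filter_congr fun p _ => by rw [psum_eq_two_mul_card_sub]; omega)

/-- For every nonnegative integer `n`, the number of paths of length `2n` that never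
return to the `x`-axis after the first step (the partial sum of the first `k` steps is
nonzero for every `1 ≤ k ≤ 2n`) equals `B_n`, the `n`-th central binomial coefficient. -/
theorem card_never_return (n : ℕ) :
    Nat.card {p : Fin (2 * n) → Bool // ∀ k, 1 ≤ k → k ≤ 2 * n → psum p k ≠ 0} =
      Nat.centralBinom n := by
  have never_return_iff (p : Fin (2 * n) → Bool) :
      (∀ k, 1 ≤ k → k ≤ 2 * n → psum p k ≠ 0) ↔ AvoidsZeroFrom 0 p := by
    simp only [AvoidsZeroFrom, zero_add]
    exact ⟨fun h k hk => h (k + 1) (by omega) hk, fun h k hk₁ hk₂ => by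
      obtain ⟨k, rfl⟩ := Nat.exists_eq_add_of_le' hk₁; exact h k hk₂⟩
  rw [Nat.card_congr (Equiv.subtypeEquivRight never_return_iff), Nat.card_eq_fintype_card,
    Fintype.card_subtype]
  obtain _ | n := n
  · rfl
  · show #{p : Fin (2 * n + 1 + 1) → Bool | AvoidsZeroFrom 0 p} = _
    rw [card_avoidsZeroFrom_zero_succ, card_avoidsZeroFrom _ le_rfl,
      card_psum_window_one_odd, Nat.centralBinom, Nat.mul_succ,
      Nat.choose_succ_succ' (2 * n + 1) n, Nat.choose_symm_half]
    ring
end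

section
/- For every nonnegative integer n, the number of even-zeroed paths of length 4n (with no restriction on the total sum of steps) equals the sum over all pairs of nonnegative integers (i, j) with i + j = n of C_{2i} · B_{2j}. -/
/-!
Cut a path at its first return to height `0`: the part before it is *primitive* (nonempty, at
height `0` only at its two ends) and the part after it is unrestricted, except that for an
even-zeroed path the cut must sit at a multiple of `4` and the rest must again be even-zeroed.
Up to a global sign, a primitive path of length `2(k+1)` is a nested Dyck word, so there are
`2 C_k` of them. Applied to all `4^m` paths of length `2m` this shows that exactly `B_m` of
them never return to `0`. Applied to even-zeroed paths it gives `E = N + F E` for the generating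
series (in `x^4`) of even-zeroed, never-returning and primitive paths. Splitting Catalan's
recurrence by parity shows that `C = ∑ C_{2i} x^i` satisfies `C = 1 + F C`, hence `C N` solves
the same equation, and the solution is unique because `F` has no constant term.
-/

open Finset

namespace Finset.Nat

theorem sum_antidiagonal_mul_of_not_dvd_eq_zero {M : Type*} [AddCommMonoid M] {d : ℕ} (hd : 0 < d)
    (m : ℕ) (f : ℕ → ℕ → M) (hf : ∀ i j, ¬ d ∣ i → f i j = 0) :
    ∑ p ∈ antidiagonal (d * m), f p.1 p.2 = ∑ p ∈ antidiagonal m, f (d * p.1) (d * p.2) := by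
  symm
  refine sum_bij_ne_zero (fun p _ _ => (d * p.1, d * p.2)) ?_ ?_ ?_ fun _ _ _ => rfl
  · rintro ⟨i, j⟩ h -
    rw [HasAntidiagonal.mem_antidiagonal] at h ⊢
    rw [← h, mul_add]
  · rintro ⟨i, j⟩ - - ⟨i', j'⟩ - - h
    simp only [Prod.mk.injEq] at h
    rw [Nat.eq_of_mul_eq_mul_left hd h.1, Nat.eq_of_mul_eq_mul_left hd h.2]
  · rintro ⟨i, j⟩ h hne
    rw [HasAntidiagonal.mem_antidiagonal] at h
    obtain ⟨a, rfl⟩ : d ∣ i := by_contra fun hi => hne (hf i j hi)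
    obtain ⟨b, rfl⟩ : d ∣ j := (Nat.dvd_add_right (dvd_mul_right d a)).1 (h ▸ dvd_mul_right d m)
    refine ⟨(a, b), ?_, hne, rfl⟩
    rw [HasAntidiagonal.mem_antidiagonal]
    exact Nat.eq_of_mul_eq_mul_left hd (by rw [mul_add, h])

theorem sum_antidiagonal_two_mul_add_one {M : Type*} [AddCommMonoid M] (i : ℕ) (f : ℕ × ℕ → M) :
    ∑ p ∈ antidiagonal (2 * i + 1), f p =
      ∑ p ∈ antidiagonal i, (f (2 * p.1, 2 * p.2 + 1) + f (2 * p.1 + 1, 2 * p.2)) := by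
  induction i generalizing f with
  | zero => simp [sum_antidiagonal_succ]
  | succ i ih =>
    rw [show 2 * (i + 1) + 1 = 2 * i + 1 + 1 + 1 by ring, sum_antidiagonal_succ,
      sum_antidiagonal_succ, ih, sum_antidiagonal_succ, ← add_assoc]
    simp only [mul_add, add_assoc]
    rfl

end Finset.Nat

theorem catalan_two_mul_add_two (i : ℕ) :
    catalan (2 * i + 2) = 2 * ∑ p ∈ antidiagonal i, catalan (2 * p.1 + 1) * catalan (2 * p.2) := by
  rw [show 2 * i + 2 = 2 * i + 1 + 1 from rfl, catalan_succ', Nat.sum_antidiagonal_two_mul_add_one,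
    sum_add_distrib, two_mul]
  congr 1
  rw [← Nat.sum_antidiagonal_swap]
  exact sum_congr rfl fun p _ => mul_comm _ _

theorem centralBinom_succ_add_two_mul_catalan (n : ℕ) :
    (n + 1).centralBinom + 2 * catalan n = 4 * n.centralBinom := by
  refine Nat.eq_of_mul_eq_mul_left (by omega : 0 < n + 1) ?_
  rw [mul_add, Nat.succ_mul_centralBinom_succ, mul_left_comm, succ_mul_catalan_eq_centralBinom]
  ring

theorem four_pow_succ_eq_centralBinom_add (m : ℕ) :
    4 ^ (m + 1) = (m + 1).centralBinom + 2 * ∑ p ∈ antidiagonal m, catalan p.1 * 4 ^ p.2 := by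
  induction m with
  | zero => simp [Nat.centralBinom_eq_two_mul_choose]
  | succ m ih =>
    have h := centralBinom_succ_add_two_mul_catalan (m + 1)
    rw [Nat.sum_antidiagonal_succ', pow_succ 4 (m + 1), ih]
    simp only [pow_succ, pow_zero, mul_one, ← mul_assoc, ← sum_mul]
    omega

theorem PowerSeries.eq_of_eq_add_mul {R : Type*} [Semiring R] {F N E T : PowerSeries R}
    (hF : constantCoeff F = 0) (hE : E = N + F * E) (hT : T = N + F * T) : E = T := by
  ext n
  induction n using Nat.strong_induction_on with
  | _ n ih =>
    rw [hE, hT, map_add, map_add, coeff_mul, coeff_mul]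
    refine congrArg _ (sum_congr rfl fun p hp => ?_)
    obtain h0 | hpos := p.1.eq_zero_or_pos
    · simp [h0, hF]
    · rw [ih p.2 (by rw [HasAntidiagonal.mem_antidiagonal] at hp; omega)]

def DyckWord.nestedEquiv (k : ℕ) :
    {p : DyckWord // p.IsNested ∧ p.toList.length = 2 * (k + 1)} ≃
      {p : DyckWord // p.semilength = k} where
  toFun p := ⟨p.1.denest p.2.1, by
    have h := congrArg DyckWord.semilength (p.1.nest_denest p.2.1)
    have := p.1.two_mul_semilength_eq_length
    rw [DyckWord.semilength_nest] at h
    omega⟩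
  invFun p := ⟨p.1.nest, DyckWord.IsNested.nest, by
    rw [← DyckWord.two_mul_semilength_eq_length, DyckWord.semilength_nest, p.2]⟩
  left_inv p := Subtype.ext (p.1.nest_denest p.2.1)
  right_inv p := Subtype.ext p.1.denest_nest

namespace LatticePath

def height (L : List Bool) : ℤ := L.count true - L.count false

@[simp] lemma height_nil : height [] = 0 := rfl

@[simp] lemma height_cons (b : Bool) (L : List Bool) :
    height (b :: L) = (if b then 1 else -1) + height L := by
  cases b <;> simp [height] <;> ring

@[simp] lemma height_append (L M : List Bool) : height (L ++ M) = height L + height M := by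
  simp only [height, List.count_append]; push_cast; ring

lemma height_map_not (L : List Bool) : height (L.map not) = -height L := by
  induction L with
  | nil => rfl
  | cons b L ih => cases b <;> simp [ih] <;> ring

lemma height_eq_sum_map (L : List Bool) : height L = (L.map fun b => if b then 1 else -1).sum := by
  induction L with
  | nil => rfl
  | cons b L ih => simp [ih]

lemma height_take_add (L : List Bool) (c j : ℕ) :
    height (L.take (c + j)) = height (L.take c) + height ((L.drop c).take j) := by
  rw [List.take_add, height_append]

lemma height_take_sub_one_le (L : List Bool) (k : ℕ) :
    height (L.take k) - 1 ≤ height (L.take (k + 1)) := by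
  have hstep : ∀ o : Option Bool, -1 ≤ height o.toList := by rintro (_ | _ | _) <;> simp
  rw [List.take_add_one, height_append]
  linarith [hstep L[k]?]

lemma even_length_of_height_eq_zero {L : List Bool} (h : height L = 0) : Even L.length := by
  rw [← List.count_true_add_count_false]
  simp only [height, sub_eq_zero, Nat.cast_inj] at h
  rw [h]; exact ⟨_, rfl⟩

def NoReturn (L : List Bool) : Prop :=
  ∀ k, 0 < k → k ≤ L.length → height (L.take k) ≠ 0

def IsPrimitive (L : List Bool) : Prop :=
  L ≠ [] ∧ height L = 0 ∧ ∀ k, 0 < k → k < L.length → height (L.take k) ≠ 0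

def ReturnsDvd (d : ℕ) (L : List Bool) : Prop :=
  ∀ k ≤ L.length, height (L.take k) = 0 → d ∣ k

lemma isPrimitive_take_iff {L : List Bool} {c : ℕ} (hc : 0 < c) (hcL : c ≤ L.length) :
    IsPrimitive (L.take c) ↔
      height (L.take c) = 0 ∧ ∀ k, 0 < k → k < c → height (L.take k) ≠ 0 := by
  have hlen : (L.take c).length = c := by simp [hcL]
  refine and_iff_right_of_imp (fun _ => ?_) |>.trans (and_congr_right fun _ => ?_)
  · rw [← List.length_pos_iff, hlen]; exact hc
  · rw [hlen]
    refine forall_congr' fun k => imp_congr_right fun _ => imp_congr_right fun hk => ?_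
    rw [List.take_take, min_eq_left hk.le]

open Classical in
noncomputable def firstReturn (L : List Bool) : ℕ :=
  if h : ∃ k, 0 < k ∧ k ≤ L.length ∧ height (L.take k) = 0 then Nat.find h else 0

lemma firstReturn_le_length (L : List Bool) : firstReturn L ≤ L.length := by
  unfold firstReturn
  split_ifs with h
  · exact (Nat.find_spec h).2.1
  · exact Nat.zero_le _

lemma firstReturn_eq_zero_iff {L : List Bool} : firstReturn L = 0 ↔ NoReturn L := by
  unfold firstReturn NoReturn
  split_ifs with h
  · simp only [Nat.find_eq_zero, lt_irrefl, false_and, false_iff, not_forall]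
    obtain ⟨k, hk, hkL, hk0⟩ := h
    exact ⟨k, hk, hkL, not_not.2 hk0⟩
  · simp only [not_exists, not_and] at h
    simpa using fun k hk hkL => h k hk hkL

lemma firstReturn_eq_iff {L : List Bool} {c : ℕ} (hc : 0 < c) :
    firstReturn L = c ↔ c ≤ L.length ∧ IsPrimitive (L.take c) := by
  unfold firstReturn
  split_ifs with h
  · rw [Nat.find_eq_iff]
    constructor
    · rintro ⟨⟨-, hcL, hc0⟩, hmin⟩
      refine ⟨hcL, (isPrimitive_take_iff hc hcL).2 ⟨hc0, fun k hk hkc hk0 => ?_⟩⟩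
      exact hmin k hkc ⟨hk, by omega, hk0⟩
    · rintro ⟨hcL, hprim⟩
      obtain ⟨hc0, hmin⟩ := (isPrimitive_take_iff hc hcL).1 hprim
      exact ⟨⟨hc, hcL, hc0⟩, fun k hkc ⟨hk, _, hk0⟩ => hmin k hk hkc hk0⟩
  · exact iff_of_false hc.ne fun ⟨hcL, hprim⟩ => h ⟨c, hc, hcL, hprim.2.1⟩

noncomputable def count (l : ℕ) (P : List Bool → Prop) : ℕ :=
  Nat.card {v : List.Vector Bool l // P v.toList}

lemma count_congr {l : ℕ} {P Q : List Bool → Prop} (h : ∀ L, L.length = l → (P L ↔ Q L)) :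
    count l P = count l Q :=
  Nat.card_congr (Equiv.subtypeEquivRight fun v => h v.toList v.toList_length)

lemma count_eq_zero {l : ℕ} {P : List Bool → Prop} (h : ∀ L, L.length = l → ¬ P L) :
    count l P = 0 := by
  rw [count, Nat.card_eq_zero]
  exact Or.inl ⟨fun v => h _ v.1.toList_length v.2⟩

lemma count_true (l : ℕ) : count l (fun _ => True) = 2 ^ l := by
  rw [count, Nat.card_congr (Equiv.subtypeUnivEquiv fun _ => trivial), Nat.card_eq_fintype_card,
    card_vector, Fintype.card_bool]

lemma count_take_drop {a b l : ℕ} (h : a + b = l) (P Q : List Bool → Prop) :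
    count l (fun L => P (L.take a) ∧ Q (L.drop a)) = count a P * count b Q := by
  subst h
  rw [count, count, count, ← Nat.card_prod]
  refine Nat.card_congr
    { toFun := fun v =>
        (⟨⟨v.1.toList.take a, by simp⟩, v.2.1⟩, ⟨⟨v.1.toList.drop a, by simp⟩, v.2.2⟩)
      invFun := fun x => ⟨⟨x.1.1.toList ++ x.2.1.toList, by simp⟩, ?_⟩
      left_inv := fun v => by ext1; ext1; simp
      right_inv := fun x => by ext <;> simp }
  simpa [List.take_left', List.drop_left'] using ⟨x.1.2, x.2.2⟩

lemma count_eq_sum_fiberwise {ι : Type*} [DecidableEq ι] {l : ℕ} (P : List Bool → Prop)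
    (f : List Bool → ι) (s : Finset ι) (hf : ∀ L, L.length = l → f L ∈ s) :
    count l P = ∑ i ∈ s, count l (fun L => P L ∧ f L = i) := by
  classical
  simp only [count, Nat.card_eq_fintype_card, Fintype.card_subtype]
  rw [card_eq_sum_card_fiberwise (f := fun v : List.Vector Bool l => f v.toList)
    (fun v _ => hf _ v.toList_length)]
  simp only [filter_filter]

lemma count_map_not (l : ℕ) (P : List Bool → Prop) :
    count l (fun L => P (L.map not)) = count l P := by
  let e : List.Vector Bool l ≃ List.Vector Bool l :=
    ⟨List.Vector.map not, List.Vector.map not, fun v => List.Vector.ext fun _ => by simp,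
      fun v => List.Vector.ext fun _ => by simp⟩
  exact Nat.card_congr (e.subtypeEquiv fun v => by simp [e])

lemma count_isPrimitive_zero : count 0 IsPrimitive = 0 :=
  count_eq_zero fun _ hL h => h.1 (List.length_eq_zero_iff.1 hL)

lemma count_isPrimitive_of_not_two_dvd {c : ℕ} (hc : ¬ 2 ∣ c) : count c IsPrimitive = 0 :=
  count_eq_zero fun _ hL h => hc (hL ▸ (even_length_of_height_eq_zero h.2.1).two_dvd)

theorem count_eq_count_noReturn_add_sum (l : ℕ) (P : List Bool → Prop) (Q : ℕ → List Bool → Prop)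
    (hP : ∀ L, NoReturn L → P L)
    (hPQ : ∀ c L, c ≤ L.length → IsPrimitive (L.take c) → (P L ↔ Q c (L.drop c))) :
    count l P = count l NoReturn +
      ∑ p ∈ antidiagonal l, count p.1 IsPrimitive * count p.2 (Q p.1) := by
  have hfiber (c : ℕ) (hc : c < l) : count l (fun L => P L ∧ firstReturn L = c + 1) =
      count (c + 1) IsPrimitive * count (l - (c + 1)) (Q (c + 1)) := by
    rw [← count_take_drop (by omega : c + 1 + (l - (c + 1)) = l)]
    refine count_congr fun L hL => ?_
    rw [firstReturn_eq_iff c.succ_pos]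
    constructor
    · rintro ⟨hPL, hcL, hprim⟩
      exact ⟨hprim, (hPQ _ L hcL hprim).1 hPL⟩
    · rintro ⟨hprim, hQ⟩
      have hcL : c + 1 ≤ L.length := by omega
      exact ⟨(hPQ _ L hcL hprim).2 hQ, hcL, hprim⟩
  have hzero : count l (fun L => P L ∧ firstReturn L = 0) = count l NoReturn :=
    count_congr fun L _ => by
      rw [firstReturn_eq_zero_iff]
      exact ⟨And.right, fun h => ⟨hP L h, h⟩⟩
  rw [count_eq_sum_fiberwise P firstReturn (range (l + 1))
      fun L hL => mem_range.2 (Nat.lt_succ_of_le ((firstReturn_le_length L).trans_eq hL)),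
    Nat.sum_antidiagonal_eq_sum_range_succ (fun i j => count i IsPrimitive * count j (Q i)),
    sum_range_succ', sum_range_succ', hzero, count_isPrimitive_zero, zero_mul, add_zero, add_comm]
  exact congrArg _ (sum_congr rfl fun c hc => hfiber c (mem_range.1 hc))

theorem four_pow_eq_count_noReturn_add_sum (m : ℕ) :
    4 ^ m = count (2 * m) NoReturn +
      ∑ p ∈ antidiagonal m, count (2 * p.1) IsPrimitive * 4 ^ p.2 := by
  have h := count_eq_count_noReturn_add_sum (2 * m) (fun _ => True) (fun _ _ => True)
    (fun _ _ => trivial) (fun _ _ _ _ => Iff.rfl)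
  simp only [count_true] at h
  rw [Nat.sum_antidiagonal_mul_of_not_dvd_eq_zero two_pos m (fun i j => count i IsPrimitive * 2 ^ j)
    fun i j hi => by rw [count_isPrimitive_of_not_two_dvd hi, zero_mul]] at h
  simpa only [pow_mul, show (2 : ℕ) ^ 2 = 4 by norm_num] using h

lemma NoReturn.returnsDvd {L : List Bool} (h : NoReturn L) (d : ℕ) : ReturnsDvd d L := by
  intro k hk hk0
  obtain rfl | hkpos := k.eq_zero_or_pos
  · exact dvd_zero d
  · exact absurd hk0 (h k hkpos hk)

lemma returnsDvd_iff_of_isPrimitive_take {d c : ℕ} {L : List Bool} (hcL : c ≤ L.length)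
    (hprim : IsPrimitive (L.take c)) : ReturnsDvd d L ↔ d ∣ c ∧ ReturnsDvd d (L.drop c) := by
  have hc : 0 < c := Nat.pos_of_ne_zero fun h => hprim.1 (by simp [h])
  obtain ⟨hc0, hmin⟩ := (isPrimitive_take_iff hc hcL).1 hprim
  have hshift (j : ℕ) : height ((L.drop c).take j) = height (L.take (c + j)) := by
    rw [height_take_add, hc0, zero_add]
  constructor
  · intro h
    refine ⟨h c hcL hc0, fun j hj hj0 => ?_⟩
    rw [List.length_drop] at hj
    exact (Nat.dvd_add_right (h c hcL hc0)).1 (h (c + j) (by omega) (hshift j ▸ hj0))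
  · rintro ⟨hdc, h⟩ k hk hk0
    obtain hkc | hck := lt_or_ge k c
    · obtain rfl | hkpos := k.eq_zero_or_pos
      · exact dvd_zero d
      · exact absurd hk0 (hmin k hkpos hkc)
    · obtain ⟨j, rfl⟩ := Nat.exists_eq_add_of_le hck
      exact dvd_add hdc (h j (by rw [List.length_drop]; omega) (by rw [hshift]; exact hk0))

theorem count_returnsDvd {d : ℕ} (hd : 0 < d) (n : ℕ) :
    count (d * n) (ReturnsDvd d) = count (d * n) NoReturn +
      ∑ p ∈ antidiagonal n, count (d * p.1) IsPrimitive * count (d * p.2) (ReturnsDvd d) := by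
  rw [count_eq_count_noReturn_add_sum (d * n) (ReturnsDvd d) (fun c M => d ∣ c ∧ ReturnsDvd d M)
      (fun _ h => h.returnsDvd d) fun _ _ => returnsDvd_iff_of_isPrimitive_take,
    Nat.sum_antidiagonal_mul_of_not_dvd_eq_zero hd n
      (fun i j => count i IsPrimitive * count j (fun M => d ∣ i ∧ ReturnsDvd d M))
      fun i j hi => by
        rw [count_eq_zero (P := fun M => d ∣ i ∧ ReturnsDvd d M) fun _ _ h => hi h.1, mul_zero]]
  congr 1
  refine sum_congr rfl fun p _ => congrArg _ (count_congr fun _ _ => ?_)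
  exact and_iff_right (dvd_mul_right d _)

lemma isPrimitive_map_not {L : List Bool} : IsPrimitive (L.map not) ↔ IsPrimitive L := by
  simp [IsPrimitive, ← List.map_take, height_map_not]

lemma IsPrimitive.height_take_pos {L : List Bool} (h : IsPrimitive L) (hL : L.headD false = true)
    {k : ℕ} (hk : 0 < k) (hkL : k < L.length) : 0 < height (L.take k) := by
  induction k with
  | zero => omega
  | succ k ih =>
    obtain rfl | hk0 := k.eq_zero_or_pos
    · obtain ⟨b, t, rfl⟩ := List.exists_cons_of_ne_nil h.1
      simp_all
    · have := ih hk0 (by omega)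
      have := height_take_sub_one_le L k
      have := h.2.2 (k + 1) hk hkL
      omega

lemma IsPrimitive.height_take_nonneg {L : List Bool} (h : IsPrimitive L)
    (hL : L.headD false = true) (k : ℕ) : 0 ≤ height (L.take k) := by
  obtain rfl | hk := k.eq_zero_or_pos
  · simp
  obtain hkL | hkL := lt_or_ge k L.length
  · exact (h.height_take_pos hL hk hkL).le
  · rw [List.take_of_length_le hkL, h.2.1]

open DyckStep in
def boolEquivDyckStep : Bool ≃ DyckStep where
  toFun b := if b then U else D
  invFun s := s = U
  left_inv b := by cases b <;> rfl
  right_inv s := by cases s <;> rfl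

open DyckStep in
lemma height_eq_count_map (L : List Bool) :
    height L = (L.map boolEquivDyckStep).count U - (L.map boolEquivDyckStep).count D := by
  rw [height, ← List.count_map_of_injective L _ boolEquivDyckStep.injective true,
    ← List.count_map_of_injective L _ boolEquivDyckStep.injective false]
  rfl

lemma height_take_eq_count (L : List Bool) (i : ℕ) :
    height (L.take i) = ((L.map boolEquivDyckStep).take i).count DyckStep.U -
      ((L.map boolEquivDyckStep).take i).count DyckStep.D := by
  rw [← List.map_take, height_eq_count_map]

def IsPrimitive.toDyckWord {L : List Bool} (h : IsPrimitive L) (hL : L.headD false = true) :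
    DyckWord where
  toList := L.map boolEquivDyckStep
  count_U_eq_count_D := by
    have := height_eq_count_map L
    have := h.2.1
    omega
  count_D_le_count_U i := by
    have := height_take_eq_count L i
    have := h.height_take_nonneg hL i
    omega

lemma IsPrimitive.isNested_toDyckWord {L : List Bool} (h : IsPrimitive L)
    (hL : L.headD false = true) : (h.toDyckWord hL).IsNested := by
  refine ⟨fun h0 => h.1 (List.map_eq_nil_iff.1 (congrArg DyckWord.toList h0)), fun i hi hiL => ?_⟩
  have := height_take_eq_count L i
  have := h.height_take_pos hL hi (by simpa [IsPrimitive.toDyckWord] using hiL)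
  simp only [IsPrimitive.toDyckWord]
  omega

lemma isPrimitive_map_of_isNested {p : DyckWord} (hp : p.IsNested) :
    IsPrimitive (p.toList.map boolEquivDyckStep.symm) ∧
      (p.toList.map boolEquivDyckStep.symm).headD false = true := by
  have hmap (i : ℕ) := height_take_eq_count (p.toList.map boolEquivDyckStep.symm) i
  have hfull := height_eq_count_map (p.toList.map boolEquivDyckStep.symm)
  simp only [List.map_map, Equiv.self_comp_symm, List.map_id] at hmap hfull
  obtain ⟨s, t, hst⟩ := List.exists_cons_of_ne_nil (DyckWord.toList_ne_nil.2 hp.1)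
  have hs : s = DyckStep.U := by simpa [hst] using p.head_eq_U (DyckWord.toList_ne_nil.2 hp.1)
  refine ⟨⟨by simp [hst], ?_, fun i hi hiL => ?_⟩, by simp [hst, hs, boolEquivDyckStep]⟩
  · have := p.count_U_eq_count_D
    omega
  · have := hmap i
    have := hp.2 hi (by simpa using hiL)
    omega

def positivePrimitiveEquiv (l : ℕ) :
    {v : List.Vector Bool l // IsPrimitive v.toList ∧ v.toList.headD false = true} ≃
      {p : DyckWord // p.IsNested ∧ p.toList.length = l} where
  toFun v := ⟨v.2.1.toDyckWord v.2.2, v.2.1.isNested_toDyckWord v.2.2,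
    by simp [IsPrimitive.toDyckWord]⟩
  invFun p :=
    ⟨⟨p.1.toList.map boolEquivDyckStep.symm, by simp [p.2.2]⟩, isPrimitive_map_of_isNested p.2.1⟩
  left_inv v := by ext1; ext1; simp [IsPrimitive.toDyckWord]
  right_inv p := by ext1; ext1; simp [IsPrimitive.toDyckWord]

theorem count_isPrimitive (k : ℕ) : count (2 * (k + 1)) IsPrimitive = 2 * catalan k := by
  have hup : count (2 * (k + 1)) (fun L => IsPrimitive L ∧ L.headD false = true) = catalan k := by
    rw [count, Nat.card_congr ((positivePrimitiveEquiv _).trans (DyckWord.nestedEquiv k)),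
      Nat.card_eq_fintype_card, DyckWord.card_dyckWord_semilength_eq_catalan]
  have hdown : count (2 * (k + 1)) (fun L => IsPrimitive L ∧ L.headD false = false) =
      count (2 * (k + 1)) (fun L => IsPrimitive L ∧ L.headD false = true) := by
    rw [← count_map_not]
    refine count_congr fun L hL => ?_
    obtain ⟨b, t, rfl⟩ := List.exists_cons_of_ne_nil (List.ne_nil_of_length_pos (l := L) (by omega))
    rw [isPrimitive_map_not]
    simp
  rw [count_eq_sum_fiberwise IsPrimitive (fun L => L.headD false) univ fun _ _ => mem_univ _,
    Fintype.sum_bool, hdown, hup, two_mul]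

theorem count_noReturn (m : ℕ) : count (2 * m) NoReturn = m.centralBinom := by
  cases m with
  | zero =>
    rw [count_congr (l := 2 * 0) (P := NoReturn) (Q := fun _ => True)
      fun L hL => iff_true_intro fun k hk hkL => by omega, count_true]
    rfl
  | succ m =>
    have h := four_pow_eq_count_noReturn_add_sum (m + 1)
    simp only [Nat.sum_antidiagonal_succ, mul_zero, count_isPrimitive_zero, zero_mul, zero_add,
      count_isPrimitive, mul_assoc, ← mul_sum] at h
    have := four_pow_succ_eq_centralBinom_add m
    omega

theorem mk_count_returnsDvd_four :
    PowerSeries.mk (fun n => count (4 * n) (ReturnsDvd 4)) =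
      PowerSeries.mk (fun i => catalan (2 * i)) *
        PowerSeries.mk (fun j => (2 * j).centralBinom) := by
  set F := PowerSeries.mk fun k => count (4 * k) IsPrimitive
  set C := PowerSeries.mk fun i => catalan (2 * i)
  set N := PowerSeries.mk fun j => (2 * j).centralBinom
  have hF4 (k : ℕ) : count (4 * (k + 1)) IsPrimitive = 2 * catalan (2 * k + 1) := by
    rw [show 4 * (k + 1) = 2 * (2 * k + 1 + 1) by ring, count_isPrimitive]
  have hC : C = 1 + F * C := by
    ext (_ | i)
    · simp [C, F, count_isPrimitive_zero]
    · rw [map_add, PowerSeries.coeff_mul, Nat.sum_antidiagonal_succ]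
      simp only [C, F, PowerSeries.coeff_mk, PowerSeries.coeff_one, Nat.add_one_ne_zero, ↓reduceIte,
        mul_zero, count_isPrimitive_zero, zero_mul, zero_add, hF4, mul_assoc]
      rw [mul_add_one, catalan_two_mul_add_two, mul_sum]
  refine PowerSeries.eq_of_eq_add_mul (N := N) (F := F) (by simp [F, count_isPrimitive_zero]) ?_ ?_
  · ext n
    rw [PowerSeries.coeff_mk, count_returnsDvd four_pos, show 4 * n = 2 * (2 * n) by ring,
      count_noReturn]
    simp [N, F, PowerSeries.coeff_mul]
  · nth_rewrite 1 [hC]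
    ring

lemma psum_eq_height {l : ℕ} (p : Fin l → Bool) (k : ℕ) :
    psum p k = height ((List.ofFn p).take k) := by
  rw [psum, ← List.sum_take_ofFn, height_eq_sum_map, List.map_take, List.map_ofFn]
  rfl

lemma isEvenZeroed_iff {l : ℕ} (p : Fin l → Bool) :
    IsEvenZeroed p ↔ ReturnsDvd 4 (List.ofFn p) := by
  simp [IsEvenZeroed, ReturnsDvd, psum_eq_height]

lemma card_isEvenZeroed (l : ℕ) :
    Nat.card {p : Fin l → Bool // IsEvenZeroed p} = count l (ReturnsDvd 4) :=
  Nat.card_congr ((Equiv.vectorEquivFin Bool l).symm.subtypeEquiv fun p => by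
    rw [isEvenZeroed_iff, ← List.Vector.toList_ofFn]
    rfl)

end LatticePath

/-- For every nonnegative integer `n`, the number of even-zeroed paths of length `4n`
equals `∑_{i+j=n} C_{2i} B_{2j}`. -/
theorem card_evenZeroed_eq_convolution (n : ℕ) :
    Nat.card {p : Fin (4 * n) → Bool // IsEvenZeroed p} =
      ∑ ij ∈ Finset.HasAntidiagonal.antidiagonal n, catalan (2 * ij.1) * Nat.centralBinom (2 * ij.2) := by
  rw [LatticePath.card_isEvenZeroed, ← PowerSeries.coeff_mk n fun n => LatticePath.count (4 * n) _,
    LatticePath.mk_count_returnsDvd_four, PowerSeries.coeff_mul]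
  simp only [PowerSeries.coeff_mk]
end

section
/- For every positive integer n, C_{2n} = 2 · ∑_{k=1}^{n} C_{2k−1} · C_{2(n−k)}, i.e., the sequence Y_n = C_{2n} satisfies the recursion Z_0 = 1 and Z_n = 2 · ∑_{k=1}^{n} C_{2k−1} · Z_{n−k} for n ≥ 1. -/
lemma sum_range_two_mul_aux (f : ℕ → ℕ) (n : ℕ) :
    ∑ i ∈ Finset.range (2 * n), f i
      = ∑ k ∈ Finset.range n, (f (2 * k) + f (2 * k + 1)) := by
  induction n with
  | zero => simp
  | succ m ih =>
      rw [Finset.sum_range_succ, ← ih, Nat.mul_succ]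
      rw [show 2 * m + 2 = (2*m + 1) + 1 from rfl, Finset.sum_range_succ,
        Finset.sum_range_succ]
      ring

/-- For every positive integer `n`, `C_{2n} = 2 ∑_{k=1}^{n} C_{2k−1} C_{2(n−k)}`. -/
theorem catalan_even_recursion (n : ℕ) (hn : 0 < n) :
    catalan (2 * n) = 2 * ∑ k ∈ Finset.Icc 1 n, catalan (2 * k - 1) * catalan (2 * (n - k)) := by
  have h1 : catalan (2 * n) = ∑ i ∈ Finset.range (2 * n),
      catalan i * catalan (2 * n - 1 - i) := by
    have := catalan_succ (2 * n - 1)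
    rw [Nat.sub_add_cancel (by omega)] at this
    rw [this, show (2 * n - 1).succ = 2 * n from by omega,
      Fin.sum_univ_eq_sum_range (fun i => catalan i * catalan (2 * n - 1 - i))]
  rw [h1, sum_range_two_mul_aux, Finset.sum_add_distrib]
  have hodd : ∑ k ∈ Finset.range n, catalan (2 * k + 1) * catalan (2 * n - 1 - (2 * k + 1))
      = ∑ k ∈ Finset.Icc 1 n, catalan (2 * k - 1) * catalan (2 * (n - k)) := by
    rw [show Finset.Icc 1 n = Finset.Ico 1 (n + 1) from rfl, Finset.sum_Ico_eq_sum_range]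
    apply Finset.sum_congr (by norm_num)
    intro k hk
    simp only [Finset.mem_range] at hk
    congr 2 <;> omega
  have heven : ∑ k ∈ Finset.range n, catalan (2 * k) * catalan (2 * n - 1 - 2 * k)
      = ∑ k ∈ Finset.range n, catalan (2 * k + 1) * catalan (2 * n - 1 - (2 * k + 1)) := by
    rw [← Finset.sum_range_reflect (fun k => catalan (2 * k) * catalan (2 * n - 1 - 2 * k)) n]
    apply Finset.sum_congr rfl
    intro k hk
    simp only [Finset.mem_range] at hk
    rw [mul_comm]
    congr 2 <;> omega
  rw [heven, hodd, two_mul]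
end
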